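/- arXiv:0901.2261 — 3 statements merged into one kernel-verified Lean document; each statement's English description precedes it below -/
import Mathlib

section
/- Let ψ be a quartic spinor and let ω be a quadratic spinor with ⟨ω,ω⟩ ≠ 0 that satisfies the algebraic Kähler condition with respect to ψ. Then there exists a constant c ∈ ℂ such that ψ_{ABCD} = c·(ω⊙ω)_{ABCD} for all A,B,C,D ∈ {0,1}; that is, ψ is of algebraic type D, a multiple of the symmetrized square of ω. -/
noncomputable section

open Finset

/-- The symplectic array ε with ε₀₁ = 1, ε₁₀ = −1, ε₀₀ = ε₁₁ = 0.
The same array is used with upper indices. -/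
def eps : Fin 2 → Fin 2 → ℂ := ![![0, 1], ![-1, 0]]

/-- A quartic spinor: invariance under all permutations of its four arguments
(equivalently, under the adjacent transpositions, which generate S₄). -/
def IsQuartic (ψ : Fin 2 → Fin 2 → Fin 2 → Fin 2 → ℂ) : Prop :=
  ∀ A B C D : Fin 2,
    ψ A B C D = ψ B A C D ∧ ψ A B C D = ψ A C B D ∧ ψ A B C D = ψ A B D C

/-- A quadratic spinor: a symmetric map. -/
def IsQuadratic (ω : Fin 2 → Fin 2 → ℂ) : Prop := ∀ A B : Fin 2, ω A B = ω B A

/-- ⟨ψ,ψ⟩ for a quartic spinor. -/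
def quarticInner (ψ : Fin 2 → Fin 2 → Fin 2 → Fin 2 → ℂ) : ℂ :=
  ∑ A, ∑ B, ∑ C, ∑ D, ∑ A1, ∑ B1, ∑ C1, ∑ D1,
    eps A A1 * eps B B1 * eps C C1 * eps D D1 * ψ A B C D * ψ A1 B1 C1 D1

/-- ⟨ω,ω⟩ for a quadratic spinor. -/
def quadInner (ω : Fin 2 → Fin 2 → ℂ) : ℂ :=
  ∑ A, ∑ B, ∑ A1, ∑ B1, eps A A1 * eps B B1 * ω A B * ω A1 B1

/-- The symmetrized square (ω⊙ω) of a quadratic spinor. -/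
def symSq (ω : Fin 2 → Fin 2 → ℂ) : Fin 2 → Fin 2 → Fin 2 → Fin 2 → ℂ :=
  fun A B C D => (1/3 : ℂ) * (ω A B * ω C D + ω A C * ω B D + ω A D * ω B C)

/-- The algebraic Kähler condition:
∑_σ ∑_{E,F} ε^{EF} ψ_{F σ(A) σ(B) σ(C)} ω_{σ(D) E} = 0 for all A,B,C,D. -/
def AlgKahler (ψ : Fin 2 → Fin 2 → Fin 2 → Fin 2 → ℂ) (ω : Fin 2 → Fin 2 → ℂ) : Prop :=
  ∀ A B C D : Fin 2,
    ∑ σ : Equiv.Perm (Fin 4), ∑ E, ∑ F,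
      eps E F * ψ F (![A, B, C, D] (σ 0)) (![A, B, C, D] (σ 1)) (![A, B, C, D] (σ 2)) *
        ω (![A, B, C, D] (σ 3)) E = 0

/-!
Read a symmetric spinor as a binary form, `ψ ↦ ψ_{ABCD} x^A x^B x^C x^D`. Since `ψ` is totally
symmetric, the symmetrised contraction `ψ_{F(ABC} ω_{D)E} ε^{EF}` is a constant multiple of the
Jacobian `∂ₓψ ∂ᵧω - ∂ᵧψ ∂ₓω` of the quartic `ψ` and the quadratic `ω`, so the algebraic Kähler
condition says that this Jacobian vanishes. Its five coefficients are linear in the five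
independent components of `ψ`, and when the discriminant `ω₀₀ ω₁₁ - ω₀₁²` (half of `⟨ω,ω⟩`) is
nonzero they cut out exactly the line spanned by `ω ⊙ ω`, i.e. by the binary form `ω²`.
-/

theorem sum_perm_fin_four_of_comm {α M : Type*} [AddCommMonoid M] (T : α → α → α → α → M)
    (h₀₁ : ∀ a b c d, T a b c d = T b a c d) (h₁₂ : ∀ a b c d, T a b c d = T a c b d)
    (v : Fin 4 → α) :
    ∑ σ : Equiv.Perm (Fin 4), T (v (σ 0)) (v (σ 1)) (v (σ 2)) (v (σ 3)) =
      6 • (T (v 1) (v 2) (v 3) (v 0) + T (v 0) (v 2) (v 3) (v 1) +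
        T (v 0) (v 1) (v 3) (v 2) + T (v 0) (v 1) (v 2) (v 3)) := by
  simp only [← Equiv.Perm.decomposeFin.symm.sum_comp, Fintype.sum_prod_type, Fintype.sum_unique,
    Fin.sum_univ_succ, Equiv.Perm.decomposeFin_symm_apply_zero, ← Fin.succ_zero_eq_one,
    ← Fin.succ_one_eq_two, show (3 : Fin 4) = Fin.succ 2 from rfl,
    Equiv.Perm.decomposeFin_symm_apply_succ, Fin.default_eq_zero]
  -- `h₀₁` and `h₁₂` are permutation lemmas, so `simp` uses them for ordered rewriting and
  -- brings each of the 24 terms to the normal form of one of the four on the right.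
  simp +decide only [Fin.succ_zero_eq_one, Fin.succ_one_eq_two, Fin.reduceSucc,
    Equiv.swap_apply_def, if_true, if_false, h₀₁, h₁₂]
  abel

/-- `h₀, …, h₄` are the coefficients of the Jacobian of the binary forms
`Σₖ (4 choose k) pₖ x⁴⁻ᵏ yᵏ` and `a x² + 2 b x y + c y²`. -/
theorem exists_eq_mul_sq_of_jacobian_eq_zero {K : Type*} [Field K] [CharZero K]
    {p₀ p₁ p₂ p₃ p₄ a b c : K} (hD : a * c - b ^ 2 ≠ 0)
    (h₀ : p₁ * a - p₀ * b = 0) (h₁ : 3 * p₂ * a - 2 * p₁ * b - p₀ * c = 0)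
    (h₂ : p₃ * a - p₁ * c = 0) (h₃ : p₄ * a + 2 * p₃ * b - 3 * p₂ * c = 0)
    (h₄ : p₄ * b - p₃ * c = 0) :
    ∃ t : K, p₀ = t * a ^ 2 ∧ p₁ = t * (a * b) ∧ p₂ = t * ((a * c + 2 * b ^ 2) / 3) ∧
      p₃ = t * (b * c) ∧ p₄ = t * c ^ 2 := by
  have hD₂ : 8 * (a * c - b ^ 2) ^ 2 ≠ 0 := mul_ne_zero (by norm_num) (pow_ne_zero 2 hD)
  -- `t = ⟨p, s⟩ / ⟨s, s⟩` for `s = (a², ab, (ac + 2b²)/3, bc, c²)` and the invariant pairing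
  -- `⟨p, r⟩ = Σₖ (-1)ᵏ (4 choose k) pₖ r₄₋ₖ`, for which `⟨s, s⟩ = 8 (ac - b²)² / 3`.
  refine ⟨3 * (p₀ * c ^ 2 - 4 * p₁ * b * c + 2 * p₂ * (a * c + 2 * b ^ 2) - 4 * p₃ * a * b +
    p₄ * a ^ 2) / (8 * (a * c - b ^ 2) ^ 2), ?_, ?_, ?_, ?_, ?_⟩ <;>
    rw [eq_comm, div_mul_eq_mul_div, div_eq_iff hD₂]
  · linear_combination (8 * b ^ 3 - 20 * a * b * c) * h₀ + (4 * a * b ^ 2 + 5 * a ^ 2 * c) * h₁ -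
      18 * a ^ 2 * b * h₂ + 3 * a ^ 3 * h₃
  · linear_combination -(4 * b ^ 2 * c + 8 * a * c ^ 2) * h₀ + (4 * b ^ 3 + 5 * a * b * c) * h₁ -
      18 * a * b ^ 2 * h₂ + 3 * a ^ 2 * b * h₃
  · linear_combination -12 * b * c ^ 2 * h₀ + (10 * b ^ 2 * c - a * c ^ 2) * h₁ -
      (12 * b ^ 3 + 6 * a * b * c) * h₂ + (2 * a * b ^ 2 + a ^ 2 * c) * h₃
  · linear_combination -8 * c ^ 3 * h₀ + 5 * b * c ^ 2 * h₁ + (2 * b ^ 2 * c - 8 * a * c ^ 2) * h₂ -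
      (4 * b ^ 3 - 3 * a * b * c) * h₃ + 4 * a * b ^ 2 * h₄
  · linear_combination -3 * c ^ 3 * h₁ + 18 * b * c ^ 2 * h₂ - (4 * b ^ 2 * c + 5 * a * c ^ 2) * h₃ -
      (8 * b ^ 3 - 20 * a * b * c) * h₄

theorem eps_zero_zero : eps 0 0 = 0 := rfl

theorem eps_zero_one : eps 0 1 = 1 := rfl

theorem eps_one_zero : eps 1 0 = -1 := rfl

theorem eps_one_one : eps 1 1 = 0 := rfl

section Spinors

variable {ψ φ : Fin 2 → Fin 2 → Fin 2 → Fin 2 → ℂ} {ω : Fin 2 → Fin 2 → ℂ}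

theorem IsQuartic.swap₀₁ (hψ : IsQuartic ψ) (a b c d : Fin 2) : ψ a b c d = ψ b a c d :=
  (hψ a b c d).1

theorem IsQuartic.swap₁₂ (hψ : IsQuartic ψ) (a b c d : Fin 2) : ψ a b c d = ψ a c b d :=
  (hψ a b c d).2.1

theorem IsQuartic.swap₂₃ (hψ : IsQuartic ψ) (a b c d : Fin 2) : ψ a b c d = ψ a b d c :=
  (hψ a b c d).2.2

theorem IsQuartic.const_mul (hψ : IsQuartic ψ) (t : ℂ) :
    IsQuartic fun A B C D => t * ψ A B C D := fun a b c d => by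
  simp only [← hψ.swap₀₁, ← hψ.swap₁₂, ← hψ.swap₂₃, and_self]

theorem IsQuartic.ext (hψ : IsQuartic ψ) (hφ : IsQuartic φ) (h₀ : ψ 0 0 0 0 = φ 0 0 0 0)
    (h₁ : ψ 0 0 0 1 = φ 0 0 0 1) (h₂ : ψ 0 0 1 1 = φ 0 0 1 1) (h₃ : ψ 0 1 1 1 = φ 0 1 1 1)
    (h₄ : ψ 1 1 1 1 = φ 1 1 1 1) : ψ = φ := by
  funext A B C D
  revert A B C D
  simp only [Fin.forall_fin_two, hψ.swap₀₁, hψ.swap₁₂, hψ.swap₂₃, hφ.swap₀₁, hφ.swap₁₂, hφ.swap₂₃,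
    h₀, h₁, h₂, h₃, h₄, and_self]

theorem IsQuadratic.isQuartic_symSq (hω : IsQuadratic ω) : IsQuartic (symSq ω) :=
  fun a b c d => by refine ⟨?_, ?_, ?_⟩ <;> simp only [symSq, hω a b, hω c d, hω b c] <;> ring

theorem IsQuadratic.quadInner_eq (hω : IsQuadratic ω) :
    quadInner ω = 2 * (ω 0 0 * ω 1 1 - ω 0 1 ^ 2) := by
  simp only [quadInner, Fin.sum_univ_two, eps_zero_zero, eps_zero_one, eps_one_zero, eps_one_one,
    hω 1 0]
  ring

def contraction (ψ : Fin 2 → Fin 2 → Fin 2 → Fin 2 → ℂ) (ω : Fin 2 → Fin 2 → ℂ) :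
    Fin 2 → Fin 2 → Fin 2 → Fin 2 → ℂ :=
  fun A B C D => ∑ E, ∑ F, eps E F * ψ F A B C * ω D E

theorem contraction_apply (A B C D : Fin 2) :
    contraction ψ ω A B C D = ψ 1 A B C * ω D 0 - ψ 0 A B C * ω D 1 := by
  simp only [contraction, Fin.sum_univ_two, eps_zero_zero, eps_zero_one, eps_one_zero, eps_one_one]
  ring

theorem AlgKahler.contraction_sum_eq_zero (halg : AlgKahler ψ ω) (hψ : IsQuartic ψ)
    (A B C D : Fin 2) :
    contraction ψ ω B C D A + contraction ψ ω A C D B + contraction ψ ω A B D C +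
      contraction ψ ω A B C D = 0 := by
  have h : ∑ σ : Equiv.Perm (Fin 4), contraction ψ ω (![A, B, C, D] (σ 0))
      (![A, B, C, D] (σ 1)) (![A, B, C, D] (σ 2)) (![A, B, C, D] (σ 3)) = 0 := halg A B C D
  rw [sum_perm_fin_four_of_comm _ (by simp only [contraction, hψ.swap₁₂, implies_true])
    (by simp only [contraction, hψ.swap₂₃, implies_true])] at h
  simp only [Matrix.cons_val_zero, Matrix.cons_val_one, Matrix.cons_val, nsmul_eq_mul,
    Nat.cast_ofNat] at h
  linear_combination h / 6

theorem AlgKahler.jacobian_eq_zero (halg : AlgKahler ψ ω) (hψ : IsQuartic ψ)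
    (hω : IsQuadratic ω) :
    ψ 0 0 0 1 * ω 0 0 - ψ 0 0 0 0 * ω 0 1 = 0 ∧
    3 * ψ 0 0 1 1 * ω 0 0 - 2 * ψ 0 0 0 1 * ω 0 1 - ψ 0 0 0 0 * ω 1 1 = 0 ∧
    ψ 0 1 1 1 * ω 0 0 - ψ 0 0 0 1 * ω 1 1 = 0 ∧
    ψ 1 1 1 1 * ω 0 0 + 2 * ψ 0 1 1 1 * ω 0 1 - 3 * ψ 0 0 1 1 * ω 1 1 = 0 ∧
    ψ 1 1 1 1 * ω 0 1 - ψ 0 1 1 1 * ω 1 1 = 0 := by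
  have h := halg.contraction_sum_eq_zero hψ
  have h₀ := h 0 0 0 0
  have h₁ := h 0 0 0 1
  have h₂ := h 0 0 1 1
  have h₃ := h 0 1 1 1
  have h₄ := h 1 1 1 1
  simp only [contraction_apply, hψ.swap₀₁, hψ.swap₁₂, hψ.swap₂₃, hω 1 0] at h₀ h₁ h₂ h₃ h₄
  exact ⟨by linear_combination h₀ / 4, by linear_combination h₁, by linear_combination h₂ / 2,
    by linear_combination h₃, by linear_combination h₄ / 4⟩

end Spinors

/-- if ω is a quadratic spinor with ⟨ω,ω⟩ ≠ 0 satisfying the algebraic Kähler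
condition with respect to a quartic spinor ψ, then ψ = c·(ω⊙ω) for some constant c. -/
theorem quartic_is_typeD_of_algKahler
    (ψ : Fin 2 → Fin 2 → Fin 2 → Fin 2 → ℂ) (ω : Fin 2 → Fin 2 → ℂ)
    (hψ : IsQuartic ψ) (hω : IsQuadratic ω)
    (hnn : quadInner ω ≠ 0) (halg : AlgKahler ψ ω) :
    ∃ c : ℂ, ∀ A B C D : Fin 2, ψ A B C D = c * symSq ω A B C D := by
  obtain ⟨h₀, h₁, h₂, h₃, h₄⟩ := halg.jacobian_eq_zero hψ hω
  have hD : ω 0 0 * ω 1 1 - ω 0 1 ^ 2 ≠ 0 := right_ne_zero_of_mul (hω.quadInner_eq ▸ hnn)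
  obtain ⟨t, e₀, e₁, e₂, e₃, e₄⟩ := exists_eq_mul_sq_of_jacobian_eq_zero hD h₀ h₁ h₂ h₃ h₄
  have hψt : ψ = fun A B C D => t * symSq ω A B C D := by
    refine hψ.ext (hω.isQuartic_symSq.const_mul t) ?_ ?_ ?_ ?_ ?_ <;> simp only [symSq]
    · linear_combination e₀
    · linear_combination e₁
    · linear_combination e₂
    · linear_combination e₃
    · linear_combination e₄
  exact ⟨t, fun A B C D => by rw [hψt]⟩
end
end

section
/- If a quartic spinor ψ satisfies I(ψ)³ = 6·J(ψ)², then its associated binary quartic p_ψ has a repeated root: there exists a nonzero homogeneous linear form l ∈ ℂ[x,y] such that l² divides p_ψ. -/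
noncomputable section

open Finset

/-- The invariant I(ψ) = ⟨ψ,ψ⟩. -/
def Ipsi (ψ : Fin 2 → Fin 2 → Fin 2 → Fin 2 → ℂ) : ℂ := quarticInner ψ

/-- The invariant J(ψ). -/
def Jpsi (ψ : Fin 2 → Fin 2 → Fin 2 → Fin 2 → ℂ) : ℂ :=
  ∑ A, ∑ B, ∑ C, ∑ D, ∑ E, ∑ F, ∑ A1, ∑ B1, ∑ C1, ∑ D1, ∑ E1, ∑ F1,
    eps C C1 * eps D D1 * eps E E1 * eps F F1 * eps A A1 * eps B B1 *
      ψ A B C1 D1 * ψ C D E1 F1 * ψ E F A1 B1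

/-- The Riemannian conjugate ψ† of a quartic spinor. -/
def quarticDagger (ψ : Fin 2 → Fin 2 → Fin 2 → Fin 2 → ℂ) :
    Fin 2 → Fin 2 → Fin 2 → Fin 2 → ℂ :=
  fun A B C D =>
    (-1 : ℂ) ^ (A.val + B.val + C.val + D.val) *
      (starRingEnd ℂ) (ψ (1 - A) (1 - B) (1 - C) (1 - D))

/-- The Riemannian conjugate ω† of a quadratic spinor. -/
def quadDagger (ω : Fin 2 → Fin 2 → ℂ) : Fin 2 → Fin 2 → ℂ :=
  fun A B => (-1 : ℂ) ^ (A.val + B.val) * (starRingEnd ℂ) (ω (1 - A) (1 - B))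

/-- The binary quartic p_ψ(x,y) associated to a quartic spinor, with π⁰ = x = X 0, π¹ = y = X 1. -/
def binaryQuartic (ψ : Fin 2 → Fin 2 → Fin 2 → Fin 2 → ℂ) : MvPolynomial (Fin 2) ℂ :=
  ∑ A, ∑ B, ∑ C, ∑ D,
    MvPolynomial.C (ψ A B C D) * MvPolynomial.X A * MvPolynomial.X B *
      MvPolynomial.X C * MvPolynomial.X D

/-!
For a symmetric spinor, `ψ_{ABCD}` depends only on `A + B + C + D`; with `a = ψ₀₀₀₀, …, e = ψ₁₁₁₁`
the quartic is `p_ψ = a x⁴ + 4b x³y + 6c x²y² + 4d xy³ + e y⁴`, and `I = 2i`, `J = 6j` for the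
classical invariants `i = ae - 4bd + 3c²`, `j = ace - ad² - b²e + 2bcd - c³`. So `I³ = 6J²` says
`i³ = 27j²`. Over `ℂ` the form splits as `p_ψ = λ ∏ₖ (αₖx - βₖy)`, and Vieta's formulas give
`256 (i³ - 27j²) = λ⁶ ∏_{k<l} (αₖβₗ - αₗβₖ)²`; hence two of the linear factors are proportional.
Factors with `αₖ = 0` are the roots at infinity of the dehomogenization `p_ψ(x, 1)`.
-/

open Polynomial

namespace Polynomial

theorem exists_sq_dvd_of_not_nodup_roots {R : Type*} [CommRing R] [IsDomain R] {p : R[X]}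
    (h : ¬ p.roots.Nodup) : ∃ r, (X - C r) ^ 2 ∣ p := by
  classical
  have hp : p ≠ 0 := by rintro rfl; simp at h
  obtain ⟨r, hr⟩ : ∃ r, 1 < p.roots.count r := by
    simpa [Multiset.nodup_iff_count_le_one] using h
  exact ⟨r, (le_rootMultiplicity_iff hp).mp (count_roots p ▸ hr)⟩

theorem coeffs_eq_of_quartic_eq {R : Type*} [Semiring R] {a b c d e a' b' c' d' e' : R}
    (h : C a * X ^ 4 + C b * X ^ 3 + C c * X ^ 2 + C d * X + C e =
      C a' * X ^ 4 + C b' * X ^ 3 + C c' * X ^ 2 + C d' * X + C e') :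
    a = a' ∧ b = b' ∧ c = c' ∧ d = d' ∧ e = e' := by
  have hk := fun k => congrArg (coeff · k) h
  refine ⟨?_, ?_, ?_, ?_, ?_⟩ <;>
    [have := hk 4; have := hk 3; have := hk 2; have := hk 1; have := hk 0] <;>
    simpa [coeff_X, coeff_C, coeff_X_pow] using this

theorem homogenize_dvd_homogenize {R : Type*} [CommRing R] [IsDomain R] {p q : R[X]} {m n : ℕ}
    (hpq : p ∣ q) (hp : p.natDegree ≤ m) (hq : q.natDegree + m ≤ n + p.natDegree) :
    p.homogenize m ∣ q.homogenize n := by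
  obtain ⟨s, rfl⟩ := hpq
  obtain rfl | hs := eq_or_ne s 0
  · simp
  obtain rfl | hp0 := eq_or_ne p 0
  · simp
  rw [natDegree_mul hp0 hs] at hq
  rw [show n = m + (n - m) by omega, homogenize_mul _ _ hp (by omega : s.natDegree ≤ n - m)]
  exact dvd_mul_right _ _

theorem exists_sq_dvd_homogenize {R : Type*} [CommRing R] [IsDomain R] {f q : R[X]} {n : ℕ}
    (hq0 : q ≠ 0) (hq : q.natDegree ≤ 1) (hqf : q ^ 2 ∣ f)
    (hf : f.natDegree + 2 ≤ n + 2 * q.natDegree) :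
    ∃ l : MvPolynomial (Fin 2) R, l ≠ 0 ∧ l.IsHomogeneous 1 ∧ l ^ 2 ∣ f.homogenize n := by
  refine ⟨q.homogenize 1, (homogenize_eq_zero_iff hq).not.mpr hq0,
    isHomogeneous_homogenize q, ?_⟩
  rw [sq, ← homogenize_mul _ _ hq hq, ← sq]
  refine homogenize_dvd_homogenize hqf ?_ ?_ <;> rw [natDegree_pow] <;> omega

end Polynomial

section BinaryQuartic

variable {K : Type*} [Field K]

/-- The dehomogenization `p(x, 1)` of `p = a x⁴ + 4b x³y + 6c x²y² + 4d xy³ + e y⁴`. -/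
def quarticPoly (a b c d e : K) : K[X] :=
  C a * X ^ 4 + C (4 * b) * X ^ 3 + C (6 * c) * X ^ 2 + C (4 * d) * X + C e

def quarticInvI (a b c d e : K) : K := a * e - 4 * b * d + 3 * c ^ 2

def quarticInvJ (a b c d e : K) : K :=
  a * c * e - a * d ^ 2 - b ^ 2 * e + 2 * b * c * d - c ^ 3

def quarticDiscr (a b c d e : K) : K :=
  quarticInvI a b c d e ^ 3 - 27 * quarticInvJ a b c d e ^ 2

theorem natDegree_quarticPoly_le (a b c d e : K) : (quarticPoly a b c d e).natDegree ≤ 4 := by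
  unfold quarticPoly; compute_degree

theorem quarticDiscr_eq_of_eq_prod [CharZero K] {a b c d e l α₁ α₂ α₃ α₄ β₁ β₂ β₃ β₄ : K}
    (h : quarticPoly a b c d e = C l *
      ((C α₁ * X - C β₁) * (C α₂ * X - C β₂) * (C α₃ * X - C β₃) * (C α₄ * X - C β₄))) :
    256 * quarticDiscr a b c d e = l ^ 6 *
      ((α₁ * β₂ - α₂ * β₁) * (α₁ * β₃ - α₃ * β₁) * (α₁ * β₄ - α₄ * β₁) *
        (α₂ * β₃ - α₃ * β₂) * (α₂ * β₄ - α₄ * β₂) * (α₃ * β₄ - α₄ * β₃)) ^ 2 := by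
  obtain ⟨rfl, hb, hc, hd, rfl⟩ := coeffs_eq_of_quartic_eq <| h.trans <| show _ =
      C (l * α₁ * α₂ * α₃ * α₄) * X ^ 4
        + C (-l * (β₁ * α₂ * α₃ * α₄ + α₁ * β₂ * α₃ * α₄ + α₁ * α₂ * β₃ * α₄
            + α₁ * α₂ * α₃ * β₄)) * X ^ 3
        + C (l * (β₁ * β₂ * α₃ * α₄ + β₁ * α₂ * β₃ * α₄ + β₁ * α₂ * α₃ * β₄
            + α₁ * β₂ * β₃ * α₄ + α₁ * β₂ * α₃ * β₄ + α₁ * α₂ * β₃ * β₄)) * X ^ 2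
        + C (-l * (α₁ * β₂ * β₃ * β₄ + β₁ * α₂ * β₃ * β₄ + β₁ * β₂ * α₃ * β₄
            + β₁ * β₂ * β₃ * α₄)) * X
        + C (l * β₁ * β₂ * β₃ * β₄) by simp only [map_mul, map_add, map_neg]; ring
  obtain rfl := eq_div_of_mul_eq (by norm_num) ((mul_comm _ _).trans hb)
  obtain rfl := eq_div_of_mul_eq (by norm_num) ((mul_comm _ _).trans hc)
  obtain rfl := eq_div_of_mul_eq (by norm_num) ((mul_comm _ _).trans hd)
  unfold quarticDiscr quarticInvI quarticInvJ
  ring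

theorem exists_quarticPoly_eq_prod_of_nodup_roots [IsAlgClosed K] {a b c d e : K}
    (hdeg : 2 < (quarticPoly a b c d e).natDegree)
    (hnodup : (quarticPoly a b c d e).roots.Nodup) :
    ∃ l α₁ α₂ α₃ α₄ β₁ β₂ β₃ β₄ : K, l ≠ 0 ∧
      quarticPoly a b c d e = C l *
        ((C α₁ * X - C β₁) * (C α₂ * X - C β₂) * (C α₃ * X - C β₃) * (C α₄ * X - C β₄)) ∧
      (α₁ * β₂ - α₂ * β₁) * (α₁ * β₃ - α₃ * β₁) * (α₁ * β₄ - α₄ * β₁) *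
        (α₂ * β₃ - α₃ * β₂) * (α₂ * β₄ - α₄ * β₂) * (α₃ * β₄ - α₄ * β₃) ≠ 0 := by
  obtain ⟨f, hf⟩ : ∃ f, f = quarticPoly a b c d e := ⟨_, rfl⟩
  rw [← hf] at hdeg hnodup ⊢
  have hlc : f.leadingCoeff ≠ 0 := leadingCoeff_ne_zero.mpr (by rintro rfl; simp at hdeg)
  have hfac :=
    C_leadingCoeff_mul_prod_multiset_X_sub_C (IsAlgClosed.card_roots_eq_natDegree (p := f))
  obtain h3 | h4 : f.natDegree = 3 ∨ f.natDegree = 4 := by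
    have := hf ▸ natDegree_quarticPoly_le a b c d e; omega
  · obtain ⟨r₁, r₂, r₃, hr⟩ :=
      Multiset.card_eq_three.mp (IsAlgClosed.card_roots_eq_natDegree.trans h3)
    simp only [hr, Multiset.insert_eq_cons, Multiset.nodup_cons, Multiset.mem_cons,
      Multiset.mem_singleton, Multiset.nodup_singleton] at hnodup
    -- the fourth root is at infinity: `C 0 * X - C (-1) = 1`
    refine ⟨f.leadingCoeff, 1, 1, 1, 0, r₁, r₂, r₃, -1, hlc, ?_, ?_⟩
    · conv_lhs => rw [← hfac, hr]
      simp only [Multiset.insert_eq_cons, Multiset.map_cons, Multiset.map_singleton,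
        Multiset.prod_cons, Multiset.prod_singleton, map_one, map_zero, map_neg]
      ring
    · simp only [one_mul, zero_mul, sub_zero, ne_eq, mul_eq_zero, sub_eq_zero, not_or]
      grind
  · obtain ⟨r₁, r₂, r₃, r₄, hr⟩ :=
      Multiset.card_eq_four.mp (IsAlgClosed.card_roots_eq_natDegree.trans h4)
    simp only [hr, Multiset.insert_eq_cons, Multiset.nodup_cons, Multiset.mem_cons,
      Multiset.mem_singleton, Multiset.nodup_singleton] at hnodup
    refine ⟨f.leadingCoeff, 1, 1, 1, 1, r₁, r₂, r₃, r₄, hlc, ?_, ?_⟩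
    · conv_lhs => rw [← hfac, hr]
      simp only [Multiset.insert_eq_cons, Multiset.map_cons, Multiset.map_singleton,
        Multiset.prod_cons, Multiset.prod_singleton, map_one]
      ring
    · simp only [one_mul, ne_eq, mul_eq_zero, sub_eq_zero, not_or]
      grind

theorem exists_sq_dvd_quarticPoly [CharZero K] [IsAlgClosed K] {a b c d e : K}
    (hdeg : 2 < (quarticPoly a b c d e).natDegree) (hΔ : quarticDiscr a b c d e = 0) :
    ∃ r, (X - C r) ^ 2 ∣ quarticPoly a b c d e := by
  by_contra hsq
  have hnodup : (quarticPoly a b c d e).roots.Nodup := by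
    by_contra h
    exact hsq (exists_sq_dvd_of_not_nodup_roots h)
  obtain ⟨l, _, _, _, _, _, _, _, _, hl, hprod, hsep⟩ :=
    exists_quarticPoly_eq_prod_of_nodup_roots hdeg hnodup
  exact mul_ne_zero (pow_ne_zero 6 hl) (pow_ne_zero 2 hsep)
    (by rw [← quarticDiscr_eq_of_eq_prod hprod, hΔ, mul_zero])

theorem exists_sq_dvd_homogenize_quarticPoly [CharZero K] [IsAlgClosed K] {a b c d e : K}
    (hΔ : quarticDiscr a b c d e = 0) :
    ∃ l : MvPolynomial (Fin 2) K, l ≠ 0 ∧ l.IsHomogeneous 1 ∧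
      l ^ 2 ∣ (quarticPoly a b c d e).homogenize 4 := by
  have hf := natDegree_quarticPoly_le a b c d e
  rcases le_or_gt (quarticPoly a b c d e).natDegree 2 with hdeg | hdeg
  · exact exists_sq_dvd_homogenize one_ne_zero (by simp) (by simp) (by simpa)
  · obtain ⟨r, hr⟩ := exists_sq_dvd_quarticPoly hdeg hΔ
    exact exists_sq_dvd_homogenize (X_sub_C_ne_zero r) (by simp) hr (by simp; omega)

end BinaryQuartic

theorem IsQuartic.apply_eq {ψ : Fin 2 → Fin 2 → Fin 2 → Fin 2 → ℂ} (hψ : IsQuartic ψ)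
    (A B C D : Fin 2) :
    ψ A B C D = ![ψ 0 0 0 0, ψ 0 0 0 1, ψ 0 0 1 1, ψ 0 1 1 1, ψ 1 1 1 1]
      ⟨A.val + B.val + C.val + D.val, by omega⟩ := by
  have h₁ A B C D : ψ A B C D = ψ B A C D := (hψ A B C D).1
  have h₂ A B C D : ψ A B C D = ψ A C B D := (hψ A B C D).2.1
  have h₃ A B C D : ψ A B C D = ψ A B D C := (hψ A B C D).2.2
  fin_cases A <;> fin_cases B <;> fin_cases C <;> fin_cases D <;> norm_num <;> grind

theorem IsQuartic.Ipsi_eq {ψ : Fin 2 → Fin 2 → Fin 2 → Fin 2 → ℂ} (hψ : IsQuartic ψ) :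
    Ipsi ψ = 2 * quarticInvI (ψ 0 0 0 0) (ψ 0 0 0 1) (ψ 0 0 1 1) (ψ 0 1 1 1) (ψ 1 1 1 1) := by
  have key := hψ.apply_eq
  generalize ψ 0 0 0 0 = a, ψ 0 0 0 1 = b, ψ 0 0 1 1 = c, ψ 0 1 1 1 = d, ψ 1 1 1 1 = e at key ⊢
  simp [Ipsi, quarticInner, Fin.sum_univ_two, key, eps, quarticInvI]
  ring

theorem IsQuartic.Jpsi_eq {ψ : Fin 2 → Fin 2 → Fin 2 → Fin 2 → ℂ} (hψ : IsQuartic ψ) :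
    Jpsi ψ = 6 * quarticInvJ (ψ 0 0 0 0) (ψ 0 0 0 1) (ψ 0 0 1 1) (ψ 0 1 1 1) (ψ 1 1 1 1) := by
  have key := hψ.apply_eq
  generalize ψ 0 0 0 0 = a, ψ 0 0 0 1 = b, ψ 0 0 1 1 = c, ψ 0 1 1 1 = d, ψ 1 1 1 1 = e at key ⊢
  simp [Jpsi, Fin.sum_univ_two, key, eps, quarticInvJ]
  ring

theorem IsQuartic.binaryQuartic_eq {ψ : Fin 2 → Fin 2 → Fin 2 → Fin 2 → ℂ} (hψ : IsQuartic ψ) :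
    binaryQuartic ψ =
      (quarticPoly (ψ 0 0 0 0) (ψ 0 0 0 1) (ψ 0 0 1 1) (ψ 0 1 1 1) (ψ 1 1 1 1)).homogenize 4 := by
  have key := hψ.apply_eq
  generalize ψ 0 0 0 0 = a, ψ 0 0 0 1 = b, ψ 0 0 1 1 = c, ψ 0 1 1 1 = d, ψ 1 1 1 1 = e at key ⊢
  simp only [quarticPoly, homogenize_add, homogenize_C_mul, homogenize_C,
    homogenize_X_pow (show 4 ≤ 4 by norm_num), homogenize_X_pow (show 3 ≤ 4 by norm_num),
    homogenize_X_pow (show 2 ≤ 4 by norm_num), homogenize_X (show 4 ≠ 0 by norm_num)]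
  simp [binaryQuartic, Fin.sum_univ_two, key, map_ofNat]
  ring

/-- if I(ψ)³ = 6·J(ψ)² then the binary quartic p_ψ has a repeated root. -/
theorem repeated_root_of_I_cubed_eq_six_J_squared
    (ψ : Fin 2 → Fin 2 → Fin 2 → Fin 2 → ℂ) (hψ : IsQuartic ψ)
    (hIJ : Ipsi ψ ^ 3 = 6 * Jpsi ψ ^ 2) :
    ∃ l : MvPolynomial (Fin 2) ℂ, l ≠ 0 ∧ l.IsHomogeneous 1 ∧ l ^ 2 ∣ binaryQuartic ψ := by
  rw [hψ.binaryQuartic_eq]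
  refine exists_sq_dvd_homogenize_quarticPoly ?_
  rw [hψ.Ipsi_eq, hψ.Jpsi_eq] at hIJ
  unfold quarticDiscr
  linear_combination hIJ / 8
end
end

section
/- Let ψ be a nonzero real quartic spinor (ψ† = ψ). Then the associated binary quartic p_ψ has no root of multiplicity three or more: there is no nonzero homogeneous linear form l ∈ ℂ[x,y] such that l³ divides p_ψ. -/
noncomputable section

open Finset

/-!
Riemannian conjugation of binary forms, `formDagger` (conjugate the coefficients and substitute
`(x, y) ↦ (-y, x)`), carries `p_ψ` to `p_{ψ†}`, so it fixes `p_ψ` when `ψ` is real, and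
`l³ ∣ p_ψ` gives `(formDagger l)³ ∣ p_ψ`. On linear forms `formDagger` is antilinear with square
`-1`, so `formDagger l = c • l` would force `|c|² = -1`: `l` and `formDagger l` are non-associated
primes of the factorial ring `ℂ[x, y]`. Hence `l³ (formDagger l)³`, of degree 6, divides the
nonzero quartic `p_ψ`, which is absurd.
-/

open MvPolynomial

theorem Prime.pow_mul_pow_dvd_of_not_dvd {M : Type*} [CommMonoidWithZero M]
    [IsCancelMulZero M] {p q a : M} (hq : Prime q) (hqp : ¬q ∣ p) {m n : ℕ}
    (hpa : p ^ m ∣ a) (hqa : q ^ n ∣ a) : p ^ m * q ^ n ∣ a := by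
  obtain ⟨b, rfl⟩ := hpa
  exact mul_dvd_mul_left _ (hq.pow_dvd_of_dvd_mul_left n (fun h ↦ hqp (hq.dvd_of_dvd_pow h)) hqa)

namespace MvPolynomial

variable {σ K : Type*}

theorem IsHomogeneous.exists_eq_sum_C_mul_X [CommSemiring K] [Fintype σ]
    {l : MvPolynomial σ K} (hl : l.IsHomogeneous 1) : ∃ c : σ → K, l = ∑ i, C (c i) * X i := by
  have : l ∈ Submodule.span K (Set.range X) := by
    rw [← homogeneousSubmodule_one_eq_span_X]; exact hl
  obtain ⟨c, hc⟩ := (Submodule.mem_span_range_iff_exists_fun K).mp this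
  exact ⟨c, by simp [← hc, smul_eq_C_mul]⟩

theorem irreducible_of_isHomogeneous_one [Field K] {l : MvPolynomial σ K}
    (hl : l.IsHomogeneous 1) (hl0 : l ≠ 0) : Irreducible l := by
  obtain ⟨d, hd⟩ := ne_zero_iff.mp hl0
  exact irreducible_of_totalDegree_eq_one (hl.totalDegree hl0)
    fun x hx ↦ isUnit_iff_ne_zero.mpr (ne_zero_of_dvd_ne_zero hd (hx d))

end MvPolynomial

def formDagger : MvPolynomial (Fin 2) ℂ →+* MvPolynomial (Fin 2) ℂ :=
  eval₂Hom (C.comp (starRingEnd ℂ)) ![-X 1, X 0]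

@[simp] lemma formDagger_C (c : ℂ) : formDagger (C c) = C (starRingEnd ℂ c) := by
  simp [formDagger]

@[simp] lemma formDagger_X_zero : formDagger (X 0) = -X 1 := by simp [formDagger]

@[simp] lemma formDagger_X_one : formDagger (X 1) = X 0 := by simp [formDagger]

lemma MvPolynomial.IsHomogeneous.formDagger {f : MvPolynomial (Fin 2) ℂ} {n : ℕ}
    (hf : f.IsHomogeneous n) : (formDagger f).IsHomogeneous n := by
  have h := hf.eval₂ (C.comp (starRingEnd ℂ) : ℂ →+* MvPolynomial (Fin 2) ℂ) ![-X 1, X 0]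
    (fun c ↦ isHomogeneous_C _ _) <| Fin.forall_fin_two.mpr
      ⟨by simpa using (isHomogeneous_X ℂ 1).neg, by simpa using isHomogeneous_X ℂ 0⟩
  rw [one_mul] at h
  exact h

lemma formDagger_formDagger_of_isHomogeneous_one {l : MvPolynomial (Fin 2) ℂ}
    (hl : l.IsHomogeneous 1) : formDagger (formDagger l) = -l := by
  obtain ⟨c, rfl⟩ := hl.exists_eq_sum_C_mul_X
  simp only [Fin.sum_univ_two, map_add, map_mul, formDagger_C, formDagger_X_zero,
    formDagger_X_one, map_neg, Complex.conj_conj]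
  ring

lemma formDagger_ne_zero {l : MvPolynomial (Fin 2) ℂ} (hl : l.IsHomogeneous 1) (hl0 : l ≠ 0) :
    formDagger l ≠ 0 := fun h ↦ by
  have := formDagger_formDagger_of_isHomogeneous_one hl
  rw [h, map_zero, zero_eq_neg] at this
  exact hl0 this

lemma formDagger_not_dvd_self {l : MvPolynomial (Fin 2) ℂ} (hl : l.IsHomogeneous 1)
    (hl0 : l ≠ 0) : ¬formDagger l ∣ l := by
  rintro ⟨r, hr⟩
  have hσl := formDagger_ne_zero hl hl0
  have hr0 : r ≠ 0 := by rintro rfl; exact hl0 (by rwa [mul_zero] at hr)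
  have hdeg := congrArg totalDegree hr
  rw [totalDegree_mul_of_isDomain hσl hr0, hl.totalDegree hl0,
    hl.formDagger.totalDegree hσl] at hdeg
  obtain ⟨c, rfl⟩ : ∃ c, r = C c := ⟨_, totalDegree_eq_zero_iff_eq_C.mp (by omega)⟩
  have h : formDagger l = -(formDagger l * C c) * C (starRingEnd ℂ c) :=
    calc formDagger l = formDagger (formDagger l * C c) := congrArg formDagger hr
      _ = -l * C (starRingEnd ℂ c) := by
        rw [map_mul, formDagger_formDagger_of_isHomogeneous_one hl, formDagger_C]
      _ = -(formDagger l * C c) * C (starRingEnd ℂ c) := by rw [← hr]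
  have : formDagger l * C (1 + c * starRingEnd ℂ c) = 0 := by
    rw [map_add, map_one, map_mul]; linear_combination h
  rw [mul_eq_zero, C_eq_zero, Complex.mul_conj, ← Complex.ofReal_one, ← Complex.ofReal_add,
    Complex.ofReal_eq_zero] at this
  exact this.elim hσl fun h ↦ by linarith [Complex.normSq_nonneg c]

lemma isHomogeneous_binaryQuartic (ψ : Fin 2 → Fin 2 → Fin 2 → Fin 2 → ℂ) :
    (binaryQuartic ψ).IsHomogeneous 4 :=
  IsHomogeneous.sum _ _ _ fun _ _ ↦ IsHomogeneous.sum _ _ _ fun _ _ ↦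
    IsHomogeneous.sum _ _ _ fun _ _ ↦ IsHomogeneous.sum _ _ _ fun _ _ ↦
      ((((isHomogeneous_C_mul_X _ _).mul (isHomogeneous_X _ _)).mul (isHomogeneous_X _ _)).mul
        (isHomogeneous_X _ _))

lemma formDagger_binaryQuartic (ψ : Fin 2 → Fin 2 → Fin 2 → Fin 2 → ℂ) :
    formDagger (binaryQuartic ψ) = binaryQuartic (quarticDagger ψ) := by
  simp only [binaryQuartic, quarticDagger, Fin.sum_univ_two, map_add, map_mul, formDagger_C,
    formDagger_X_zero, formDagger_X_one, C_pow, C_neg, C_1, Fin.isValue,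
    Fin.coe_ofNat_eq_mod, Nat.zero_mod, Nat.mod_succ, sub_zero, sub_self]
  ring

-- Oriented so that `simp` sorts the indices of a value of `ψ`.
lemma IsQuartic.sort {ψ : Fin 2 → Fin 2 → Fin 2 → Fin 2 → ℂ} (hψ : IsQuartic ψ) :
    (∀ C D, ψ 1 0 C D = ψ 0 1 C D) ∧ (∀ A D, ψ A 1 0 D = ψ A 0 1 D) ∧
      ∀ A B, ψ A B 1 0 = ψ A B 0 1 :=
  ⟨fun C D ↦ (hψ 1 0 C D).1, fun A D ↦ (hψ A 1 0 D).2.1, fun A B ↦ (hψ A B 1 0).2.2⟩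

lemma IsQuartic.eq_zero {ψ : Fin 2 → Fin 2 → Fin 2 → Fin 2 → ℂ} (hψ : IsQuartic ψ)
    (h₀ : ψ 0 0 0 0 = 0) (h₁ : ψ 0 0 0 1 = 0) (h₂ : ψ 0 0 1 1 = 0) (h₃ : ψ 0 1 1 1 = 0)
    (h₄ : ψ 1 1 1 1 = 0) : ψ = 0 := by
  obtain ⟨h₀₁, h₁₂, h₂₃⟩ := hψ.sort
  funext A B C D
  fin_cases A <;> fin_cases B <;> fin_cases C <;> fin_cases D <;>
    simp [h₀₁, h₁₂, h₂₃, h₀, h₁, h₂, h₃, h₄]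

lemma IsQuartic.eval₂_binaryQuartic {ψ : Fin 2 → Fin 2 → Fin 2 → Fin 2 → ℂ}
    (hψ : IsQuartic ψ) :
    eval₂ Polynomial.C ![Polynomial.X, 1] (binaryQuartic ψ) =
      .C (ψ 0 0 0 0) * .X ^ 4 + .C (4 * ψ 0 0 0 1) * .X ^ 3 + .C (6 * ψ 0 0 1 1) * .X ^ 2 +
        .C (4 * ψ 0 1 1 1) * .X + .C (ψ 1 1 1 1) := by
  obtain ⟨h₀₁, h₁₂, h₂₃⟩ := hψ.sort
  simp only [binaryQuartic, Fin.sum_univ_two, h₀₁, h₁₂, h₂₃, eval₂_add, eval₂_mul, eval₂_C,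
    eval₂_X, Matrix.cons_val_zero, Matrix.cons_val_one, map_mul, map_ofNat]
  ring

lemma IsQuartic.binaryQuartic_ne_zero {ψ : Fin 2 → Fin 2 → Fin 2 → Fin 2 → ℂ}
    (hψ : IsQuartic ψ) (hψ0 : ψ ≠ 0) : binaryQuartic ψ ≠ 0 := by
  intro hp
  have hq := hψ.eval₂_binaryQuartic
  rw [hp, eval₂_zero] at hq
  have hcoeff k := congrArg (Polynomial.coeff · k) hq.symm
  have h₀ := hcoeff 4
  have h₁ := hcoeff 3
  have h₂ := hcoeff 2
  have h₃ := hcoeff 1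
  have h₄ := hcoeff 0
  simp only [Polynomial.coeff_add, Polynomial.coeff_C_mul_X_pow, Polynomial.coeff_C_mul_X,
    Polynomial.coeff_C, Polynomial.coeff_zero] at h₀ h₁ h₂ h₃ h₄
  norm_num at h₀ h₁ h₂ h₃ h₄
  exact hψ0 (hψ.eq_zero h₀ h₁ h₂ h₃ h₄)

/-- the binary quartic of a nonzero real quartic spinor has no root of
multiplicity three or more. -/
theorem real_quartic_no_triple_root
    (ψ : Fin 2 → Fin 2 → Fin 2 → Fin 2 → ℂ) (hψ : IsQuartic ψ)
    (hreal : quarticDagger ψ = ψ) (hne : ψ ≠ fun _ _ _ _ => 0) :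
    ¬ ∃ l : MvPolynomial (Fin 2) ℂ, l ≠ 0 ∧ l.IsHomogeneous 1 ∧ l ^ 3 ∣ binaryQuartic ψ := by
  rintro ⟨l, hl0, hl, hdvd⟩
  have hp0 : binaryQuartic ψ ≠ 0 := hψ.binaryQuartic_ne_zero hne
  have hσl0 : formDagger l ≠ 0 := formDagger_ne_zero hl hl0
  have hσdvd : formDagger l ^ 3 ∣ binaryQuartic ψ := by
    simpa [formDagger_binaryQuartic, hreal] using map_dvd formDagger hdvd
  have hprime : Prime (formDagger l) := UniqueFactorizationMonoid.irreducible_iff_prime.mp <|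
    irreducible_of_isHomogeneous_one hl.formDagger hσl0
  have h6 : (l ^ 3 * formDagger l ^ 3).totalDegree ≤ (binaryQuartic ψ).totalDegree :=
    totalDegree_le_of_dvd_of_isDomain
      (hprime.pow_mul_pow_dvd_of_not_dvd (formDagger_not_dvd_self hl hl0) hdvd hσdvd) hp0
  rw [((hl.pow 3).mul (hl.formDagger.pow 3)).totalDegree (by simp [hl0, hσl0]),
    (isHomogeneous_binaryQuartic ψ).totalDegree hp0] at h6
  omega
end
end
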